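/- If nonzero polynomials r₁, …, rₙ in a polynomial ring over a field admit a monomial order with respect to which their leading monomials are pairwise coprime, then r₁, …, rₙ is a regular sequence. -/

import Mathlib

/-!
Coprime leading monomials make `r₀, …, r_{k-1}` a Gröbner basis of the ideal they span, for
every `k`. Inserting one polynomial `r` into a Gröbner basis `B` whose leading monomials are
coprime to that of `r`: write `h = a + g r` with `a ∈ (B)` and `g` reduced modulo `B`. The
leading terms of `a` and `g r` cannot cancel, because `lm a` is divisible by some `lm b`, and a
monomial `lm b` coprime to `lm r` dividing `lm g + lm r` would divide `lm g`. So `lm h` is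
`lm a` or `lm g + lm r`. The same non-cancellation shows that `r_k f ∈ (r₀, …, r_{k-1})` forces
the remainder of `f` modulo `r₀, …, r_{k-1}` to vanish, which is regularity.
-/

open MvPolynomial

theorem Finsupp.le_of_le_add_of_disjoint {σ : Type*} {ℓ d μ : σ →₀ ℕ}
    (h : ℓ ≤ d + μ) (hdisj : Disjoint ℓ μ) : ℓ ≤ d := by
  intro s
  have := h s
  by_cases hs : s ∈ ℓ.support
  · have : μ s = 0 := Finsupp.notMem_support_iff.mp <|
      Finset.disjoint_left.mp (Finsupp.disjoint_iff.mp hdisj) hs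
    simp_all
  · simp_all

namespace MonomialOrder

section OfLT

variable {σ : Type*}

/-- A copy of `σ →₀ ℕ`, to be ordered by `lt` instead of pointwise. -/
def OrderedBy (_ : (σ →₀ ℕ) → (σ →₀ ℕ) → Prop) : Type _ := σ →₀ ℕ

variable (lt : (σ →₀ ℕ) → (σ →₀ ℕ) → Prop)

noncomputable instance : AddCommMonoid (OrderedBy lt) :=
  inferInstanceAs (AddCommMonoid (σ →₀ ℕ))

def toOrderedBy : (σ →₀ ℕ) ≃+ OrderedBy lt :=
  { Equiv.refl _ with map_add' := fun _ _ => rfl }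

variable [IsStrictTotalOrder (σ →₀ ℕ) lt]

noncomputable instance : LinearOrder (OrderedBy lt) :=
  @linearOrderOfSTO (OrderedBy lt) lt ‹_› (Classical.decRel _)

theorem toOrderedBy_le_iff {a b : σ →₀ ℕ} :
    toOrderedBy lt a ≤ toOrderedBy lt b ↔ a = b ∨ lt a b :=
  Iff.rfl

variable {lt}

theorem monotone_toOrderedBy (hadd : ∀ a b c, lt a b → lt (a + c) (b + c))
    (hzero : ∀ a, a ≠ 0 → lt 0 a) : Monotone (toOrderedBy lt) := by
  intro a b hab
  obtain ⟨c, rfl⟩ := exists_add_of_le hab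
  rw [toOrderedBy_le_iff]
  rcases eq_or_ne c 0 with rfl | hc
  · exact Or.inl (add_zero a).symm
  · exact Or.inr (by simpa [add_comm] using hadd 0 c a (hzero c hc))

noncomputable def ofLT [Finite σ] (hadd : ∀ a b c, lt a b → lt (a + c) (b + c))
    (hzero : ∀ a, a ≠ 0 → lt 0 a) : MonomialOrder σ where
  syn := OrderedBy lt
  toSyn := toOrderedBy lt
  isOrderedAddMonoid_syn :=
    { add_le_add_left := fun a b hab c =>
        ((toOrderedBy_le_iff lt).mp hab).imp (congrArg (· + c)) (hadd a b c) }
  toSyn_monotone := monotone_toOrderedBy hadd hzero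
  -- Dickson's lemma: a total order extending the pointwise order is a well-order.
  wellFoundedLT_syn := by
    have := (monotone_toOrderedBy hadd hzero).wellQuasiOrderedLE_of_wellQuasiOrderedLE_of_surjective
      (toOrderedBy lt).surjective
    infer_instance

theorem ofLT_toSyn_lt_iff [Finite σ] {hadd : ∀ a b c, lt a b → lt (a + c) (b + c)}
    {hzero : ∀ a, a ≠ 0 → lt 0 a} {a b : σ →₀ ℕ} :
    (ofLT hadd hzero).toSyn a < (ofLT hadd hzero).toSyn b ↔ lt a b :=
  Iff.rfl

end OfLT

theorem degree_eq_of_forall_lt {σ R : Type*} [CommSemiring R] (m : MonomialOrder σ)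
    {f : MvPolynomial σ R} {d : σ →₀ ℕ} (hd : d ∈ f.support)
    (hmax : ∀ e ∈ f.support, e ≠ d → m.toSyn e < m.toSyn d) : m.degree f = d := by
  by_contra hne
  have hf : f ≠ 0 := by
    rintro rfl
    simp at hd
  exact (m.le_degree hd).not_gt (hmax _ (m.degree_mem_support hf) hne)

variable {σ K : Type*} [Field K] (m : MonomialOrder σ)

def IsGroebnerBasis (B : Set (MvPolynomial σ K)) : Prop :=
  ∀ f ∈ Ideal.span B, f ≠ 0 → ∃ b ∈ B, m.degree b ≤ m.degree f

theorem exists_sub_mem_span_forall_not_degree_le {B : Set (MvPolynomial σ K)}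
    (hB : ∀ b ∈ B, b ≠ 0) (f : MvPolynomial σ K) :
    ∃ g, f - g ∈ Ideal.span B ∧ ∀ c ∈ g.support, ∀ b ∈ B, ¬ m.degree b ≤ c := by
  obtain ⟨q, g, hfg, -, hg⟩ := m.div_set (fun b hb => m.isUnit_leadingCoeff.mpr (hB b hb)) f
  refine ⟨g, ?_, hg⟩
  rw [hfg, add_sub_cancel_right]
  have := LinearMap.mem_range_self (Finsupp.linearCombination (MvPolynomial σ K)
    (fun b : B => (b : MvPolynomial σ K))) q
  rwa [Finsupp.range_linearCombination, Subtype.range_coe] at this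

namespace IsGroebnerBasis

variable {m} {B : Set (MvPolynomial σ K)}

theorem add_mul_ne_zero_and_exists_degree_le (hGB : m.IsGroebnerBasis B)
    {r g a : MvPolynomial σ K} (hr : r ≠ 0)
    (hdisj : ∀ b ∈ B, Disjoint (m.degree b) (m.degree r))
    (hg : g ≠ 0) (hgB : ∀ b ∈ B, ¬ m.degree b ≤ m.degree g) (ha : a ∈ Ideal.span B) :
    a + g * r ≠ 0 ∧ ∃ b ∈ insert r B, m.degree b ≤ m.degree (a + g * r) := by
  have hgr : m.degree (g * r) = m.degree g + m.degree r := m.degree_mul hg hr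
  have hgrB : ∀ b ∈ B, ¬ m.degree b ≤ m.degree (g * r) := fun b hb hle =>
    hgB b hb (Finsupp.le_of_le_add_of_disjoint (hgr ▸ hle) (hdisj b hb))
  by_cases ha0 : a = 0
  · rw [ha0, zero_add, hgr]
    exact ⟨mul_ne_zero hg hr, r, Set.mem_insert r B, le_add_self⟩
  obtain ⟨b, hb, hba⟩ := hGB a ha ha0
  refine ⟨fun h => hgrB b hb ?_, ?_⟩
  · rwa [eq_neg_of_add_eq_zero_left h, m.degree_neg] at hba
  rcases lt_trichotomy (m.toSyn (m.degree a)) (m.toSyn (m.degree (g * r))) with hlt | heq | hgt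
  · rw [m.degree_add_eq_right_of_lt hlt, hgr]
    exact ⟨r, Set.mem_insert r B, le_add_self⟩
  · exact absurd (m.toSyn.injective heq ▸ hba) (hgrB b hb)
  · rw [m.degree_add_of_lt hgt]
    exact ⟨b, Set.mem_insert_of_mem r hb, hba⟩

theorem insert (hGB : m.IsGroebnerBasis B) (hB : ∀ b ∈ B, b ≠ 0) {r : MvPolynomial σ K}
    (hr : r ≠ 0) (hdisj : ∀ b ∈ B, Disjoint (m.degree b) (m.degree r)) :
    m.IsGroebnerBasis (insert r B) := by
  intro h hh h0
  obtain ⟨f, a, ha, rfl⟩ := Ideal.mem_span_insert.mp hh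
  obtain ⟨g, hfg, hgB⟩ := m.exists_sub_mem_span_forall_not_degree_le hB f
  by_cases hg : g = 0
  · rw [hg, sub_zero] at hfg
    obtain ⟨b, hb, hle⟩ := hGB _ (add_mem (Ideal.mul_mem_right r _ hfg) ha) h0
    exact ⟨b, Set.mem_insert_of_mem r hb, hle⟩
  have hsplit : f * r + a = (a + (f - g) * r) + g * r := by ring
  rw [hsplit]
  exact (hGB.add_mul_ne_zero_and_exists_degree_le hr hdisj hg
    (fun b hb => hgB _ (m.degree_mem_support hg) b hb)
    (add_mem ha (Ideal.mul_mem_right r _ hfg))).2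

theorem mem_of_mul_mem (hGB : m.IsGroebnerBasis B) (hB : ∀ b ∈ B, b ≠ 0)
    {r f : MvPolynomial σ K} (hr : r ≠ 0) (hdisj : ∀ b ∈ B, Disjoint (m.degree b) (m.degree r))
    (hrf : r * f ∈ Ideal.span B) : f ∈ Ideal.span B := by
  obtain ⟨g, hfg, hgB⟩ := m.exists_sub_mem_span_forall_not_degree_le hB f
  suffices hg : g = 0 by rwa [hg, sub_zero] at hfg
  by_contra hg
  have hrg : -(g * r) ∈ Ideal.span B := by
    have : -(g * r) = r * (f - g) - r * f := by ring
    rw [this]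
    exact sub_mem (Ideal.mul_mem_left _ r hfg) hrf
  exact (hGB.add_mul_ne_zero_and_exists_degree_le hr hdisj hg
    (fun b hb => hgB _ (m.degree_mem_support hg) b hb) hrg).1 (neg_add_cancel _)

end IsGroebnerBasis

theorem isGroebnerBasis_of_pairwise_disjoint_degree {rs : List (MvPolynomial σ K)}
    (h0 : ∀ r ∈ rs, r ≠ 0) (hdisj : rs.Pairwise fun p q => Disjoint (m.degree p) (m.degree q)) :
    m.IsGroebnerBasis {r | r ∈ rs} := by
  induction rs with
  | nil =>
    intro f hf hf0
    simp_all
  | cons r rs ih =>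
    rw [List.pairwise_cons] at hdisj
    have hset : {p | p ∈ r :: rs} = insert r {p | p ∈ rs} := by ext; simp
    rw [hset]
    exact (ih (fun p hp => h0 p (List.mem_cons_of_mem r hp)) hdisj.2).insert
      (fun p hp => h0 p (List.mem_cons_of_mem r hp)) (h0 r List.mem_cons_self)
      (fun p hp => (hdisj.1 p hp).symm)

theorem isWeaklyRegular_of_pairwise_disjoint_degree {rs : List (MvPolynomial σ K)}
    (h0 : ∀ r ∈ rs, r ≠ 0) (hdisj : rs.Pairwise fun p q => Disjoint (m.degree p) (m.degree q)) :
    RingTheory.Sequence.IsWeaklyRegular (MvPolynomial σ K) rs := by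
  refine ⟨fun i hi => ?_⟩
  rw [isSMulRegular_quotient_iff_mem_of_smul_mem]
  intro f hf
  rw [smul_eq_mul, Ideal.mul_top] at hf ⊢
  have hprefix := hdisj.sublist (List.take_sublist (i + 1) rs)
  rw [List.take_succ_eq_append_getElem hi, List.pairwise_append] at hprefix
  obtain ⟨hprefix, -, hlast⟩ := hprefix
  have h0' : ∀ r ∈ rs.take i, r ≠ 0 := fun r hr => h0 r (List.mem_of_mem_take hr)
  exact (m.isGroebnerBasis_of_pairwise_disjoint_degree h0' hprefix).mem_of_mul_mem h0'
    (h0 _ (List.getElem_mem hi)) (fun b hb => hlast b hb _ (List.mem_singleton_self _)) hf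

end MonomialOrder

theorem stmt_12 {K : Type*} [Field K] (m n : ℕ)
    (lt : (Fin m →₀ ℕ) → (Fin m →₀ ℕ) → Prop)
    (hto : IsTrichotomous (Fin m →₀ ℕ) lt) (htr : IsTrans (Fin m →₀ ℕ) lt)
    (hirr : IsIrrefl (Fin m →₀ ℕ) lt)
    (hadd : ∀ a b c : Fin m →₀ ℕ, lt a b → lt (a + c) (b + c))
    (hzero : ∀ a : Fin m →₀ ℕ, a ≠ 0 → lt 0 a)
    (r : Fin n → MvPolynomial (Fin m) K)
    (hr : ∀ i, r i ≠ 0)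
    (lm : Fin n → (Fin m →₀ ℕ))
    (hlm : ∀ i, lm i ∈ (r i).support ∧ ∀ μ ∈ (r i).support, μ ≠ lm i → lt μ (lm i))
    (hcop : ∀ i j, i ≠ j → ∀ s : Fin m, lm i s = 0 ∨ lm j s = 0) :
    RingTheory.Sequence.IsWeaklyRegular (MvPolynomial (Fin m) K) (List.ofFn r) := by
  have : IsStrictTotalOrder (Fin m →₀ ℕ) lt := {}
  let ord := MonomialOrder.ofLT hadd hzero
  have hdeg : ∀ i, ord.degree (r i) = lm i := fun i =>
    ord.degree_eq_of_forall_lt (hlm i).1 fun μ hμ hne =>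
      MonomialOrder.ofLT_toSyn_lt_iff.mpr ((hlm i).2 μ hμ hne)
  refine ord.isWeaklyRegular_of_pairwise_disjoint_degree (by simpa [List.mem_ofFn] using hr) ?_
  rw [List.pairwise_ofFn]
  intro i j hij
  rw [hdeg, hdeg]
  exact Finsupp.disjoint_iff.mpr <| Finset.disjoint_left.mpr fun s hi hj =>
    (hcop i j hij.ne s).elim (Finsupp.mem_support_iff.mp hi) (Finsupp.mem_support_iff.mp hj)
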